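/- Let (S, μ) be a measure space with μ ≥ 0 σ-finite and f₁, ..., f_p : S → [0,∞] measurable such that the family is comonotone: for all 1 ≤ i,j ≤ p and t₁, t₂ ∈ S, f_i(t₁) < f_i(t₂) implies f_j(t₁) ≤ f_j(t₂). Then ∫_S f₁⋯f_p dμ = ∫_{[0,∞)} ⟨f₁|μ⟩(x)⋯⟨f_p|μ⟩(x) dx, where ⟨g|μ⟩(x) = inf{ y : μ(g > y) ≤ x } is the decreasing rearrangement. -/

import Mathlib

open MeasureTheory ENNReal

/-- The decreasing rearrangement (straightening) of `g` along `μ`: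
`⟨g|μ⟩(x) = inf { y : μ(g > y) ≤ x }`. -/
noncomputable def rearrangement {S : Type*} [MeasurableSpace S] (μ : Measure S)
    (g : S → ℝ≥0∞) (x : ℝ) : ℝ≥0∞ :=
  sInf {y : ℝ≥0∞ | μ {t | y < g t} ≤ ENNReal.ofReal x}

private lemma exists_min_chain {α : Type*} :
    ∀ (p : ℕ), 0 < p → ∀ (A : Fin p → Set α),
      (∀ i j, A i ⊆ A j ∨ A j ⊆ A i) → ∃ i₀, ∀ j, A i₀ ⊆ A j := by
  intro p
  induction p with
  | zero => omega
  | succ n ih =>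
    intro _ A hA
    rcases Nat.eq_zero_or_pos n with h0 | hn
    · subst h0
      refine ⟨0, fun j => ?_⟩
      have hj : j = 0 := Fin.ext (by omega)
      rw [hj]
    · obtain ⟨i₀, hi₀⟩ := ih hn (fun i => A i.castSucc) fun i j => hA _ _
      rcases hA i₀.castSucc (Fin.last n) with h | h
      · exact ⟨i₀.castSucc, fun j => Fin.lastCases h hi₀ j⟩
      · exact ⟨Fin.last n, fun j => Fin.lastCases subset_rfl (fun k => h.trans (hi₀ k)) j⟩

private lemma measure_iInter_chain {α : Type*} [MeasurableSpace α] (m : Measure α)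
    {p : ℕ} (hp : 0 < p) (A : Fin p → Set α)
    (hA : ∀ i j, A i ⊆ A j ∨ A j ⊆ A i) :
    m (⋂ i, A i) = ⨅ i, m (A i) := by
  obtain ⟨i₀, hi₀⟩ := exists_min_chain p hp A hA
  have h1 : (⋂ i, A i) = A i₀ :=
    Set.Subset.antisymm (Set.iInter_subset _ _) (Set.subset_iInter hi₀)
  rw [h1]
  exact le_antisymm (le_iInf fun j => measure_mono (hi₀ j)) (iInf_le _ i₀)

private lemma vol_Ioi (a : ℝ≥0∞) :
    (volume.restrict (Set.Ioi (0:ℝ))) {r | ENNReal.ofReal r < a} = a := by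
  have hm : MeasurableSet {r : ℝ | ENNReal.ofReal r < a} :=
    measurableSet_lt ENNReal.measurable_ofReal measurable_const
  rw [Measure.restrict_apply hm]
  rcases eq_or_ne a ∞ with rfl | ha
  · have h : {r : ℝ | ENNReal.ofReal r < ∞} = Set.univ := by
      ext r; simp [ENNReal.ofReal_lt_top]
    rw [h, Set.univ_inter, Real.volume_Ioi]
  · have h : {r : ℝ | ENNReal.ofReal r < a} ∩ Set.Ioi 0 = Set.Ioo 0 a.toReal := by
      ext r
      simp only [Set.mem_inter_iff, Set.mem_setOf_eq, Set.mem_Ioi, Set.mem_Ioo]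
      constructor
      · rintro ⟨h1, h2⟩
        exact ⟨h2, (ENNReal.ofReal_lt_iff_lt_toReal h2.le ha).mp h1⟩
      · rintro ⟨h1, h2⟩
        exact ⟨(ENNReal.ofReal_lt_iff_lt_toReal h1.le ha).mpr h2, h1⟩
    rw [h, Real.volume_Ioo]
    simp [ENNReal.ofReal_toReal ha]

private lemma vol_Ici (a : ℝ≥0∞) :
    (volume.restrict (Set.Ici (0:ℝ))) {r | ENNReal.ofReal r < a} = a := by
  have hm : MeasurableSet {r : ℝ | ENNReal.ofReal r < a} :=
    measurableSet_lt ENNReal.measurable_ofReal measurable_const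
  rw [Measure.restrict_apply hm]
  rcases eq_or_ne a ∞ with rfl | ha
  · have h : {r : ℝ | ENNReal.ofReal r < ∞} = Set.univ := by
      ext r; simp [ENNReal.ofReal_lt_top]
    rw [h, Set.univ_inter, Real.volume_Ici]
  · have h : {r : ℝ | ENNReal.ofReal r < a} ∩ Set.Ici 0 = Set.Ico 0 a.toReal := by
      ext r
      simp only [Set.mem_inter_iff, Set.mem_setOf_eq, Set.mem_Ici, Set.mem_Ico]
      constructor
      · rintro ⟨h1, h2⟩
        exact ⟨h2, (ENNReal.ofReal_lt_iff_lt_toReal h2 ha).mp h1⟩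
      · rintro ⟨h1, h2⟩
        exact ⟨(ENNReal.ofReal_lt_iff_lt_toReal h1 ha).mpr h2, h1⟩
    rw [h, Real.volume_Ico]
    simp [ENNReal.ofReal_toReal ha]

private lemma prod_eq_pi {p : ℕ} (a : Fin p → ℝ≥0∞) :
    ∏ i, a i =
      (Measure.pi fun _ : Fin p => volume.restrict (Set.Ioi (0:ℝ)))
        {y | ∀ i, ENNReal.ofReal (y i) < a i} := by
  have h : {y : Fin p → ℝ | ∀ i, ENNReal.ofReal (y i) < a i}
      = Set.pi Set.univ fun i => {r | ENNReal.ofReal r < a i} := by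
    ext y; simp [Set.mem_pi]
  rw [h, Measure.pi_pi]
  exact Finset.prod_congr rfl fun i _ => (vol_Ioi (a i)).symm

private lemma lintegral_prod_pi {T : Type*} [MeasurableSpace T] (m : Measure T)
    [SigmaFinite m] {p : ℕ} (h : Fin p → T → ℝ≥0∞) (hh : ∀ i, Measurable (h i)) :
    ∫⁻ t, ∏ i, h i t ∂m =
      ∫⁻ y, m {t | ∀ i, ENNReal.ofReal (y i) < h i t}
        ∂(Measure.pi fun _ : Fin p => volume.restrict (Set.Ioi (0:ℝ))) := by
  set ν := Measure.pi fun _ : Fin p => volume.restrict (Set.Ioi (0:ℝ)) with hν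
  set C : Set (T × (Fin p → ℝ)) := {q | ∀ i, ENNReal.ofReal (q.2 i) < h i q.1} with hCdef
  have hC : MeasurableSet C := by
    have h2 : C = ⋂ i, {q : T × (Fin p → ℝ) | ENNReal.ofReal (q.2 i) < h i q.1} := by
      ext q; simp [hCdef]
    rw [h2]
    exact MeasurableSet.iInter fun i =>
      measurableSet_lt
        (ENNReal.measurable_ofReal.comp ((measurable_pi_apply i).comp measurable_snd))
        ((hh i).comp measurable_fst)
  calc ∫⁻ t, ∏ i, h i t ∂m
      = ∫⁻ t, ∫⁻ y, C.indicator 1 (t, y) ∂ν ∂m := by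
        refine lintegral_congr fun t => ?_
        rw [prod_eq_pi (fun i => h i t)]
        have hs : MeasurableSet {y : Fin p → ℝ | (t, y) ∈ C} :=
          measurable_prodMk_left hC
        have heq : ∫⁻ y, C.indicator 1 (t, y) ∂ν = ν {y | (t, y) ∈ C} := by
          rw [← lintegral_indicator_one hs]
          refine lintegral_congr fun y => ?_
          by_cases hy : (t, y) ∈ C <;> simp [hy]
        rw [heq]
        rfl
    _ = ∫⁻ y, ∫⁻ t, C.indicator 1 (t, y) ∂m ∂ν :=
        lintegral_lintegral_swap ((measurable_one.indicator hC).aemeasurable)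
    _ = ∫⁻ y, m {t | ∀ i, ENNReal.ofReal (y i) < h i t} ∂ν := by
        refine lintegral_congr fun y => ?_
        have hs : MeasurableSet {t : T | (t, y) ∈ C} :=
          measurable_prodMk_right hC
        have heq : ∫⁻ t, C.indicator 1 (t, y) ∂m = m {t | (t, y) ∈ C} := by
          rw [← lintegral_indicator_one hs]
          refine lintegral_congr fun t => ?_
          by_cases ht : (t, y) ∈ C <;> simp [ht]
        rw [heq]
        rfl

private lemma rearrangement_le_iff {S : Type*} [MeasurableSpace S] (μ : Measure S)
    (g : S → ℝ≥0∞) (x : ℝ) (z : ℝ≥0∞) :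
    rearrangement μ g x ≤ z ↔ μ {t | z < g t} ≤ ENNReal.ofReal x := by
  constructor
  · intro h
    have key : μ {t | rearrangement μ g x < g t} ≤ ENNReal.ofReal x := by
      rcases eq_or_ne (rearrangement μ g x) ∞ with htop | htop
      · have h0 : {t | rearrangement μ g x < g t} = ∅ := by
          ext t; simp [htop]
        simp [h0]
      · have hunion : {t | rearrangement μ g x < g t}
            = ⋃ n : ℕ, {t | rearrangement μ g x + (n : ℝ≥0∞)⁻¹ < g t} := by
          ext t
          simp only [Set.mem_setOf_eq, Set.mem_iUnion]
          constructor
          · intro hlt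
            obtain ⟨b, hb1, hb2⟩ := exists_between hlt
            obtain ⟨n, hn⟩ := ENNReal.exists_inv_nat_lt (tsub_pos_of_lt hb1).ne'
            refine ⟨n, lt_of_le_of_lt ?_ hb2⟩
            calc rearrangement μ g x + (n:ℝ≥0∞)⁻¹
                ≤ rearrangement μ g x + (b - rearrangement μ g x) :=
                  add_le_add_right hn.le _
            _ = b := add_tsub_cancel_of_le hb1.le
          · rintro ⟨n, hn⟩
            exact lt_of_le_of_lt le_self_add hn
        have hdir : Directed (· ⊆ ·)
            (fun n : ℕ => {t | rearrangement μ g x + (n : ℝ≥0∞)⁻¹ < g t}) := by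
          have hmono : Monotone
              (fun n : ℕ => {t | rearrangement μ g x + (n : ℝ≥0∞)⁻¹ < g t}) := by
            intro a b hab t ht
            have hinv : (b : ℝ≥0∞)⁻¹ ≤ (a : ℝ≥0∞)⁻¹ :=
              ENNReal.inv_le_inv.mpr (by exact_mod_cast hab)
            exact lt_of_le_of_lt (add_le_add_right hinv _) ht
          exact hmono.directed_le
        rw [hunion, hdir.measure_iUnion]
        refine iSup_le fun n => ?_
        have hlt : rearrangement μ g x < rearrangement μ g x + (n:ℝ≥0∞)⁻¹ :=
          ENNReal.lt_add_right htop (by simp)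
        have hlt' : sInf {y : ℝ≥0∞ | μ {t | y < g t} ≤ ENNReal.ofReal x}
            < rearrangement μ g x + (n:ℝ≥0∞)⁻¹ := hlt
        obtain ⟨a, haA, halt⟩ := sInf_lt_iff.mp hlt'
        exact le_trans (measure_mono fun t ht => halt.trans ht) haA
    exact le_trans (measure_mono fun t ht => lt_of_le_of_lt h ht) key
  · intro h
    exact sInf_le h

private lemma lt_rearrangement_iff {S : Type*} [MeasurableSpace S] (μ : Measure S)
    (g : S → ℝ≥0∞) (x : ℝ) (z : ℝ≥0∞) :
    z < rearrangement μ g x ↔ ENNReal.ofReal x < μ {t | z < g t} := by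
  rw [← not_le, ← not_le, rearrangement_le_iff]

private lemma rearrangement_antitone {S : Type*} [MeasurableSpace S] (μ : Measure S)
    (g : S → ℝ≥0∞) : Antitone (rearrangement μ g) :=
  fun _ _ hxy => sInf_le_sInf fun _ hz => hz.trans (ENNReal.ofReal_le_ofReal hxy)

theorem stmt_12 {S : Type*} [MeasurableSpace S] (μ : Measure S) [SigmaFinite μ]
    (p : ℕ) (hp : 1 ≤ p) (f : Fin p → S → ℝ≥0∞) (hf : ∀ i, Measurable (f i))
    (hcomon : ∀ i j : Fin p, ∀ t₁ t₂ : S, f i t₁ < f i t₂ → f j t₁ ≤ f j t₂) :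
    ∫⁻ t, ∏ i : Fin p, f i t ∂μ =
      ∫⁻ x in Set.Ici (0 : ℝ), ∏ i : Fin p, rearrangement μ (f i) x := by
  have hp' : 0 < p := hp
  have hR : ∀ i, Measurable (rearrangement μ (f i)) := fun i =>
    (rearrangement_antitone μ (f i)).measurable
  rw [lintegral_prod_pi μ f hf,
    lintegral_prod_pi (volume.restrict (Set.Ici (0:ℝ)))
      (fun i => rearrangement μ (f i)) hR]
  refine lintegral_congr fun y => ?_
  have hchainL : ∀ i j : Fin p,
      {t | ENNReal.ofReal (y i) < f i t} ⊆ {t | ENNReal.ofReal (y j) < f j t} ∨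
      {t | ENNReal.ofReal (y j) < f j t} ⊆ {t | ENNReal.ofReal (y i) < f i t} := by
    intro i j
    by_cases hij : {t | ENNReal.ofReal (y i) < f i t} ⊆ {t | ENNReal.ofReal (y j) < f j t}
    · exact Or.inl hij
    · right
      obtain ⟨t, hti, htj⟩ := Set.not_subset.mp hij
      intro s hs
      simp only [Set.mem_setOf_eq] at *
      exact lt_of_lt_of_le hti (hcomon j i t s (lt_of_le_of_lt (not_lt.mp htj) hs))
  have hL : μ {t | ∀ i, ENNReal.ofReal (y i) < f i t}
      = ⨅ i, μ {t | ENNReal.ofReal (y i) < f i t} := by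
    have h1 : {t | ∀ i, ENNReal.ofReal (y i) < f i t}
        = ⋂ i, {t | ENNReal.ofReal (y i) < f i t} := by
      ext t; simp
    rw [h1]
    exact measure_iInter_chain μ hp' _ hchainL
  have hRset : {x : ℝ | ∀ i, ENNReal.ofReal (y i) < rearrangement μ (f i) x}
      = ⋂ i, {x : ℝ | ENNReal.ofReal x < μ {t | ENNReal.ofReal (y i) < f i t}} := by
    ext x
    simp only [Set.mem_setOf_eq, Set.mem_iInter]
    exact forall_congr' fun i => lt_rearrangement_iff μ (f i) x _
  have hchainR : ∀ i j : Fin p,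
      {x : ℝ | ENNReal.ofReal x < μ {t | ENNReal.ofReal (y i) < f i t}} ⊆
        {x : ℝ | ENNReal.ofReal x < μ {t | ENNReal.ofReal (y j) < f j t}} ∨
      {x : ℝ | ENNReal.ofReal x < μ {t | ENNReal.ofReal (y j) < f j t}} ⊆
        {x : ℝ | ENNReal.ofReal x < μ {t | ENNReal.ofReal (y i) < f i t}} := by
    intro i j
    rcases le_total (μ {t | ENNReal.ofReal (y i) < f i t})
        (μ {t | ENNReal.ofReal (y j) < f j t}) with h | h
    · exact Or.inl fun x hx => lt_of_lt_of_le hx h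
    · exact Or.inr fun x hx => lt_of_lt_of_le hx h
  rw [hL, hRset, measure_iInter_chain _ hp' _ hchainR]
  exact (iInf_congr fun i => vol_Ici _).symm
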